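/- (Effective stability for a nearly integrable normal form.) Let $T\geq 1$ and $C_0\geq 0$. Let $D\subseteq\mathbb{R}^d$ be open, $I_0\in D$ with the closed ball $\bar B(I_0,T^{-2/3})\subseteq D$, let $N,G:D\to\mathbb{R}$ be of class $C^2$ with $|\nabla^2 N(I)|\leq C_0$ and $|\nabla^2 G(I)|\leq C_0$ for all $I\in\bar B(I_0,T^{-2/3})$, and let $R:\mathbb{R}^d\times D\to\mathbb{R}$ be of class $C^1$ with $|\partial_I R(\theta,I)|\leq T^{-1}$ and $|\partial_\theta R(\theta,I)|\leq T^{-1}$ for all $(\theta,I)\in\mathbb{R}^d\times D$. Let $(\theta(t),I(t))$ be a solution of $\dot\theta=\nabla N(I)+\nabla G(I)+\partial_I R(\theta,I)$, $\dot I=-\partial_\theta R(\theta,I)$ with $I(0)=I_0$, and set $\omega(I_0)=\nabla N(I_0)+\nabla G(I_0)$. Then for all $|t|\leq T^{1/3}$ the solution is defined, $|I(t)-I_0|\leq T^{-2/3}$, and $|\theta(t)-\theta(0)-t\,\omega(I_0)|\leq (2C_0+1)\,T^{-1/3}$. -/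

import Mathlib

open Real Metric Set

noncomputable section

def grad (d : ℕ) (N : (Fin d → ℝ) → ℝ) : (Fin d → ℝ) → (Fin d → ℝ) :=
  fun I j => fderiv ℝ N I (Pi.single j 1)

/-!
The action `I` moves with speed at most `|∂_θ R| ≤ T⁻¹` for as long as it stays in the ball
`B̄(I₀, T^{-2/3})` where the estimates hold; a continuity argument shows it cannot leave the ball
before time `T^{1/3}`, since `T⁻¹ · T^{1/3} = T^{-2/3}`. Inside the ball the Hessian bounds give
`|ω(I(t)) - ω(I₀)| ≤ 2C₀T^{-2/3}`, so `θ̇` differs from `ω(I₀)` by at most `2C₀T^{-2/3} + T⁻¹`,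
and integrating over `|t| ≤ T^{1/3}` gives the drift bound `(2C₀ + 1)T^{-1/3}`.
-/

open Filter Topology

section Bootstrap

variable {E : Type*} [NormedAddCommGroup E] [NormedSpace ℝ E] {f f' : ℝ → E} {b r c : ℝ}

/-- Continuous induction: the set of times with `‖f t - f 0‖ ≤ c * t` is closed, and each such
time before `b` leaves room below `r`, so the speed bound persists a little further. -/
theorem norm_sub_le_mul_of_norm_deriv_le_near (hr : 0 < r) (hcb : c * b ≤ r)
    (hf : ∀ t ∈ Icc 0 b, HasDerivWithinAt f (f' t) (Icc 0 b) t)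
    (hbound : ∀ t ∈ Icc 0 b, ‖f t - f 0‖ ≤ r → ‖f' t‖ ≤ c) :
    ∀ t ∈ Icc 0 b, ‖f t - f 0‖ ≤ c * t := by
  have hcont : ContinuousOn f (Icc 0 b) := fun t ht => (hf t ht).continuousWithinAt
  have hclosed : IsClosed ({t | ‖f t - f 0‖ ≤ c * t} ∩ Icc 0 b) := by
    rw [inter_comm]
    exact isClosed_Icc.isClosed_le ((hcont.sub continuousOn_const).norm) (by fun_prop)
  refine fun t ht => hclosed.Icc_subset_of_forall_mem_nhdsWithin (by simp) ?_ ht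
  rintro x ⟨hx, hx0, hxb⟩
  have hxr : ‖f x - f 0‖ < r := hx.trans_lt (by nlinarith)
  have hnear : ∀ᶠ y in 𝓝[≥] x, y ∈ Icc 0 b ∧ ‖f y - f 0‖ < r := by
    refine nhdsWithin_le_of_mem (Icc_mem_nhdsGE_of_mem ⟨hx0, hxb⟩) ?_
    exact eventually_mem_nhdsWithin.and
      (((hcont x ⟨hx0, hxb.le⟩).sub_const (f 0)).norm.eventually_lt_const hxr)
  obtain ⟨u, hxu, hu⟩ := mem_nhdsGE_iff_exists_Ico_subset.mp hnear
  filter_upwards [Ioo_mem_nhdsGT hxu] with y hy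
  have hsub : Icc x y ⊆ Icc 0 b := fun s hs => (hu ⟨hs.1, hs.2.trans_lt hy.2⟩).1
  have hstep : ‖f y - f x‖ ≤ c * (y - x) :=
    norm_image_sub_le_of_norm_deriv_le_segment' (fun s hs => (hf s (hsub hs)).mono hsub)
      (fun s hs => hbound s (hsub (Ico_subset_Icc_self hs))
        (hu ⟨hs.1, hs.2.trans hy.2⟩).2.le) y (right_mem_Icc.mpr hy.1.le)
  calc ‖f y - f 0‖ ≤ ‖f y - f x‖ + ‖f x - f 0‖ := norm_sub_le_norm_sub_add_norm_sub _ _ _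
    _ ≤ c * (y - x) + c * x := add_le_add hstep hx
    _ = c * y := by ring

theorem norm_sub_le_mul_abs_of_norm_deriv_le_near (hr : 0 < r) (hcb : c * b ≤ r)
    (hf : ∀ t ∈ Icc (-b) b, HasDerivAt f (f' t) t)
    (hbound : ∀ t ∈ Icc (-b) b, ‖f t - f 0‖ ≤ r → ‖f' t‖ ≤ c) :
    ∀ t ∈ Icc (-b) b, ‖f t - f 0‖ ≤ c * |t| := by
  have hneg : ∀ s ∈ Icc 0 b, -s ∈ Icc (-b) b := fun s hs =>
    ⟨neg_le_neg hs.2, by linarith [hs.1, hs.2]⟩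
  intro t ht
  rcases le_total 0 t with ht0 | ht0
  · rw [abs_of_nonneg ht0]
    exact norm_sub_le_mul_of_norm_deriv_le_near hr hcb
      (fun s hs => (hf s ⟨by linarith [hs.1, hs.2], hs.2⟩).hasDerivWithinAt)
      (fun s hs => hbound s ⟨by linarith [hs.1, hs.2], hs.2⟩) t ⟨ht0, ht.2⟩
  · have h := norm_sub_le_mul_of_norm_deriv_le_near (f := fun s => f (-s))
      (f' := fun s => -f' (-s)) hr hcb
      (fun s hs => by
        simpa [Function.comp_def] using
          ((hf (-s) (hneg s hs)).scomp s (hasDerivAt_neg s)).hasDerivWithinAt)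
      (fun s hs hs' => by simpa using hbound (-s) (hneg s hs) (by simpa using hs'))
      (-t) ⟨neg_nonneg.mpr ht0, by linarith [ht.1]⟩
    simpa [abs_of_nonpos ht0] using h

theorem norm_sub_sub_smul_le_of_norm_deriv_sub_le {ω : E} {K : ℝ} {s : Set ℝ}
    (hs : Convex ℝ s) (h0 : (0 : ℝ) ∈ s) (hf : ∀ t ∈ s, HasDerivAt f (f' t) t)
    (hbound : ∀ t ∈ s, ‖f' t - ω‖ ≤ K) :
    ∀ t ∈ s, ‖f t - f 0 - t • ω‖ ≤ K * |t| := by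
  intro t ht
  have h := hs.norm_image_sub_le_of_norm_hasDerivWithin_le (f := fun u => f u - u • ω)
    (f' := fun u => f' u - ω)
    (fun u hu => by
      have h := (hf u hu).sub ((hasDerivAt_id u).smul_const ω)
      rw [one_smul] at h
      exact h.hasDerivWithinAt)
    hbound h0 ht
  simpa [sub_right_comm] using h

end Bootstrap

section Gradient

variable {d : ℕ} {D : Set (Fin d → ℝ)} {N G : (Fin d → ℝ) → ℝ} {I0 I1 : Fin d → ℝ} {C r : ℝ}

theorem differentiableAt_grad (hD : IsOpen D) (hN : ContDiffOn ℝ 2 N D) {x : Fin d → ℝ}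
    (hx : x ∈ D) :
    DifferentiableAt ℝ (grad d N) x := by
  have h : DifferentiableAt ℝ (fderiv ℝ N) x :=
    ((hN.fderiv_of_isOpen (m := 1) hD (by norm_num)).differentiableOn one_ne_zero).differentiableAt
      (hD.mem_nhds hx)
  exact differentiableAt_pi.mpr fun j => h.clm_apply (differentiableAt_const _)

theorem norm_grad_sub_le (hD : IsOpen D) (hN : ContDiffOn ℝ 2 N D) (hC : 0 ≤ C)
    (hball : closedBall I0 r ⊆ D)
    (hhess : ∀ I ∈ closedBall I0 r, ∀ v, ‖fderiv ℝ (grad d N) I v‖ ≤ C * ‖v‖)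
    (hI1 : I1 ∈ closedBall I0 r) :
    ‖grad d N I1 - grad d N I0‖ ≤ C * ‖I1 - I0‖ :=
  (convex_closedBall I0 r).norm_image_sub_le_of_norm_fderiv_le
    (fun _ hx => differentiableAt_grad hD hN (hball hx))
    (fun x hx => ContinuousLinearMap.opNorm_le_bound _ hC (hhess x hx))
    (mem_closedBall_self (dist_nonneg.trans hI1)) hI1

theorem norm_frequency_sub_le (hD : IsOpen D) (hN : ContDiffOn ℝ 2 N D)
    (hG : ContDiffOn ℝ 2 G D) (hC : 0 ≤ C) (hball : closedBall I0 r ⊆ D)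
    (hNhess : ∀ I ∈ closedBall I0 r, ∀ v, ‖fderiv ℝ (grad d N) I v‖ ≤ C * ‖v‖)
    (hGhess : ∀ I ∈ closedBall I0 r, ∀ v, ‖fderiv ℝ (grad d G) I v‖ ≤ C * ‖v‖)
    (hI1 : I1 ∈ closedBall I0 r) {ρ : Fin d → ℝ} {ε : ℝ} (hρ : ‖ρ‖ ≤ ε) :
    ‖grad d N I1 + grad d G I1 + ρ - (grad d N I0 + grad d G I0)‖ ≤ 2 * C * r + ε := by
  have hN' := norm_grad_sub_le hD hN hC hball hNhess hI1
  have hG' := norm_grad_sub_le hD hG hC hball hGhess hI1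
  have hI1' : C * ‖I1 - I0‖ ≤ C * r :=
    mul_le_mul_of_nonneg_left (mem_closedBall_iff_norm.mp hI1) hC
  calc ‖grad d N I1 + grad d G I1 + ρ - (grad d N I0 + grad d G I0)‖
      = ‖(grad d N I1 - grad d N I0) + (grad d G I1 - grad d G I0) + ρ‖ := by abel_nf
    _ ≤ ‖grad d N I1 - grad d N I0‖ + ‖grad d G I1 - grad d G I0‖ + ‖ρ‖ := norm_add₃_le
    _ ≤ 2 * C * r + ε := by linarith

end Gradient

theorem rpow_third_identities {T : ℝ} (hT : 0 < T) :
    T⁻¹ * T ^ ((1:ℝ)/3) = T ^ (-(2:ℝ)/3) ∧ T ^ (-(2:ℝ)/3) * T ^ ((1:ℝ)/3) = T ^ (-(1:ℝ)/3) := by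
  constructor
  · rw [← rpow_neg_one, ← rpow_add hT]
    norm_num
  · rw [← rpow_add hT]
    norm_num

theorem effective_stability_normal_form_general
    (d : ℕ) (T C0 : ℝ) (hT : 1 ≤ T) (hC0 : 0 ≤ C0)
    (D : Set (Fin d → ℝ)) (hD : IsOpen D)
    (I0 : Fin d → ℝ) (hball : closedBall I0 (T ^ (-(2:ℝ)/3)) ⊆ D)
    (N G : (Fin d → ℝ) → ℝ) (R : (Fin d → ℝ) × (Fin d → ℝ) → ℝ)
    (hN : ContDiffOn ℝ 2 N D) (hG : ContDiffOn ℝ 2 G D)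
    -- `|∇²N| ≤ C₀` and `|∇²G| ≤ C₀` on `B̄(I₀, T^{-2/3})`
    (hNhess : ∀ I ∈ closedBall I0 (T ^ (-(2:ℝ)/3)), ∀ v : Fin d → ℝ,
      ‖fderiv ℝ (grad d N) I v‖ ≤ C0 * ‖v‖)
    (hGhess : ∀ I ∈ closedBall I0 (T ^ (-(2:ℝ)/3)), ∀ v : Fin d → ℝ,
      ‖fderiv ℝ (grad d G) I v‖ ≤ C0 * ‖v‖)
    -- `|∂_I R| ≤ T⁻¹` and `|∂_θ R| ≤ T⁻¹` on `ℝ^d × D`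
    (hRI : ∀ p : (Fin d → ℝ) × (Fin d → ℝ), p.2 ∈ D →
      ‖fun j => fderiv ℝ R p ((0 : Fin d → ℝ), Pi.single j 1)‖ ≤ T⁻¹)
    (hRθ : ∀ p : (Fin d → ℝ) × (Fin d → ℝ), p.2 ∈ D →
      ‖fun j => fderiv ℝ R p (Pi.single j 1, (0 : Fin d → ℝ))‖ ≤ T⁻¹)
    -- `(θ, I)` solves the Hamiltonian equations on `|t| ≤ T^{1/3}`, `I(0) = I₀`
    (θ I : ℝ → Fin d → ℝ)
    (hsol : ∀ t ∈ Icc (-(T ^ ((1:ℝ)/3))) (T ^ ((1:ℝ)/3)),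
      HasDerivAt θ (fun j => grad d N (I t) j + grad d G (I t) j
        + fderiv ℝ R (θ t, I t) ((0 : Fin d → ℝ), Pi.single j 1)) t ∧
      HasDerivAt I (fun j => -fderiv ℝ R (θ t, I t) (Pi.single j 1, (0 : Fin d → ℝ))) t)
    (hI0 : I 0 = I0) :
    ∀ t ∈ Icc (-(T ^ ((1:ℝ)/3))) (T ^ ((1:ℝ)/3)),
      ‖I t - I0‖ ≤ T ^ (-(2:ℝ)/3) ∧
      ‖θ t - θ 0 - t • (fun j => grad d N I0 j + grad d G I0 j)‖
        ≤ (2 * C0 + 1) * T ^ (-(1:ℝ)/3) := by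
  have hT0 : 0 < T := one_pos.trans_le hT
  obtain ⟨hcb, hrb⟩ := rpow_third_identities hT0
  set b := T ^ ((1:ℝ)/3)
  set r := T ^ (-(2:ℝ)/3)
  have hstay : ∀ t ∈ Icc (-b) b, ‖I t - I0‖ ≤ r := by
    have hbound : ∀ s ∈ Icc (-b) b, ‖I s - I 0‖ ≤ r →
        ‖fun j => -fderiv ℝ R (θ s, I s) (Pi.single j 1, (0 : Fin d → ℝ))‖ ≤ T⁻¹ := by
      intro s _ hs
      rw [hI0, ← mem_closedBall_iff_norm] at hs
      exact (norm_neg _).trans_le (hRθ (θ s, I s) (hball hs))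
    intro t ht
    have hmove := norm_sub_le_mul_abs_of_norm_deriv_le_near (rpow_pos_of_pos hT0 _) hcb.le
      (fun s hs => (hsol s hs).2) hbound t ht
    rw [hI0] at hmove
    calc ‖I t - I0‖ ≤ T⁻¹ * |t| := hmove
      _ ≤ T⁻¹ * b := by gcongr; exact abs_le.mpr ht
      _ = r := hcb
  intro t ht
  refine ⟨hstay t ht, ?_⟩
  have hdrift := norm_sub_sub_smul_le_of_norm_deriv_sub_le (convex_Icc (-b) b)
    ⟨by linarith [ht.1, ht.2], by linarith [ht.1, ht.2]⟩ (fun s hs => (hsol s hs).1)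
    (fun s hs => by
      have hIs := mem_closedBall_iff_norm.mpr (hstay s hs)
      exact norm_frequency_sub_le hD hN hG hC0 hball hNhess hGhess hIs
        (hRI (θ s, I s) (hball hIs))) t ht
  have hr_le : r ≤ T ^ (-(1:ℝ)/3) := rpow_le_rpow_of_exponent_le hT (by norm_num)
  calc _ ≤ (2 * C0 * r + T⁻¹) * |t| := hdrift
    _ ≤ (2 * C0 * r + T⁻¹) * b := by gcongr; exact abs_le.mpr ht
    _ = 2 * C0 * T ^ (-(1:ℝ)/3) + r := by rw [add_mul, mul_assoc, hrb, hcb]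
    _ ≤ (2 * C0 + 1) * T ^ (-(1:ℝ)/3) := by linarith

/-- **Effective stability for a nearly integrable normal form** (the final step in
the proof of the main theorem): let `T ≥ 1`, `C₀ ≥ 0`, let `N, G` be `C²` on an
open set `D` with Hessians bounded by `C₀` on the closed ball
`B̄(I₀, T^{-2/3}) ⊆ D`, and let `R` be `C¹` with `|∂_I R| ≤ T⁻¹`, `|∂_θ R| ≤ T⁻¹`
on `ℝ^d × D`.  Every solution of `θ̇ = ∇N(I) + ∇G(I) + ∂_I R`, `İ = -∂_θ R` with
`I(0) = I₀` satisfies, for `|t| ≤ T^{1/3}`, `|I(t) - I₀| ≤ T^{-2/3}` and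
`|θ(t) - θ(0) - t ω(I₀)| ≤ (2C₀+1) T^{-1/3}` where `ω(I₀) = ∇N(I₀) + ∇G(I₀)`. -/
theorem effective_stability_normal_form
    (d : ℕ) (hd : 2 ≤ d) (T C0 : ℝ) (hT : 1 ≤ T) (hC0 : 0 ≤ C0)
    (D : Set (Fin d → ℝ)) (hD : IsOpen D)
    (I0 : Fin d → ℝ) (hball : closedBall I0 (T ^ (-(2:ℝ)/3)) ⊆ D)
    (N G : (Fin d → ℝ) → ℝ) (R : (Fin d → ℝ) × (Fin d → ℝ) → ℝ)
    (hN : ContDiffOn ℝ 2 N D) (hG : ContDiffOn ℝ 2 G D)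
    (hR : ContDiffOn ℝ 1 R ((univ : Set (Fin d → ℝ)) ×ˢ D))
    -- `|∇²N| ≤ C₀` and `|∇²G| ≤ C₀` on `B̄(I₀, T^{-2/3})`
    (hNhess : ∀ I ∈ closedBall I0 (T ^ (-(2:ℝ)/3)), ∀ v : Fin d → ℝ,
      ‖fderiv ℝ (grad d N) I v‖ ≤ C0 * ‖v‖)
    (hGhess : ∀ I ∈ closedBall I0 (T ^ (-(2:ℝ)/3)), ∀ v : Fin d → ℝ,
      ‖fderiv ℝ (grad d G) I v‖ ≤ C0 * ‖v‖)
    -- `|∂_I R| ≤ T⁻¹` and `|∂_θ R| ≤ T⁻¹` on `ℝ^d × D`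
    (hRI : ∀ p : (Fin d → ℝ) × (Fin d → ℝ), p.2 ∈ D →
      ‖fun j => fderiv ℝ R p ((0 : Fin d → ℝ), Pi.single j 1)‖ ≤ T⁻¹)
    (hRθ : ∀ p : (Fin d → ℝ) × (Fin d → ℝ), p.2 ∈ D →
      ‖fun j => fderiv ℝ R p (Pi.single j 1, (0 : Fin d → ℝ))‖ ≤ T⁻¹)
    -- `(θ, I)` solves the Hamiltonian equations on `|t| ≤ T^{1/3}`, `I(0) = I₀`
    (θ I : ℝ → Fin d → ℝ)
    (hsol : ∀ t ∈ Icc (-(T ^ ((1:ℝ)/3))) (T ^ ((1:ℝ)/3)),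
      HasDerivAt θ (fun j => grad d N (I t) j + grad d G (I t) j
        + fderiv ℝ R (θ t, I t) ((0 : Fin d → ℝ), Pi.single j 1)) t ∧
      HasDerivAt I (fun j => -fderiv ℝ R (θ t, I t) (Pi.single j 1, (0 : Fin d → ℝ))) t)
    (hI0 : I 0 = I0) :
    ∀ t ∈ Icc (-(T ^ ((1:ℝ)/3))) (T ^ ((1:ℝ)/3)),
      ‖I t - I0‖ ≤ T ^ (-(2:ℝ)/3) ∧
      ‖θ t - θ 0 - t • (fun j => grad d N I0 j + grad d G I0 j)‖
        ≤ (2 * C0 + 1) * T ^ (-(1:ℝ)/3) :=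
  effective_stability_normal_form_general d T C0 hT hC0 D hD I0 hball N G R hN hG hNhess hGhess hRI
    hRθ θ I hsol hI0
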